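/- Let τ₀ : ℝ² → (0,∞) and Q₀ : ℝ² → ℂ_I be smooth, and let v : ℝ² → W be a smooth map with H(v,v) nowhere vanishing, satisfying the v-system: ∂_z v = (∂_z(log √τ₀))·v + (i·Q₀/√τ₀)·J·v and ∂_z̄ v = (i·√τ₀/4)·J·v. Then ∂_z̄ Q₀ = 0 (Q₀ is I-holomorphic) and ∂_z(∂_z̄(log √τ₀)) = −|Q₀|²/τ₀ + τ₀/16. (These are the compatibility conditions of the spinor equation of H = 1/2 surfaces in ℝ^{1,2}.) -/

import Mathlib

/-!
`ℍ^ℂ` is modelled as `Quaternion ℂ` (complex coefficients on `1, I, J, K`, central complex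
unit `i = Complex.I`, `I² = J² = K² = −1`, `I*J = K = −J*I`).  Maps on `ℝ²` are taken on
`ℝ × ℝ`; smoothness and the partial derivatives `∂ₓ`, `∂_y` are meant coefficientwise, and
`qdz f = (1/2)(∂ₓ f − I·∂_y f)`, `qdzbar f = (1/2)(∂ₓ f + I·∂_y f)` (left multiplication
by the quaternion `I`).  `cI` embeds `ℂ` as `ℂ_I = ℝ·1 ⊕ ℝ·I ⊂ ℍ^ℂ`.
-/

noncomputable section

/-- The quaternion `I`. -/
def Iq : Quaternion ℂ := ⟨0, 1, 0, 0⟩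

/-- The quaternion `J`. -/
def Jq : Quaternion ℂ := ⟨0, 0, 1, 0⟩

/-- Coefficientwise complex conjugation `â` on the complex quaternions. -/
def qhat (a : Quaternion ℂ) : Quaternion ℂ :=
  ⟨starRingEnd ℂ a.re, starRingEnd ℂ a.imI, starRingEnd ℂ a.imJ, starRingEnd ℂ a.imK⟩

/-- The embedding of `ℂ` onto `ℂ_I = ℝ·1 ⊕ ℝ·I ⊂ ℍ^ℂ`, sending the complex unit to `I`. -/
def cI (w : ℂ) : Quaternion ℂ := ⟨((w.re : ℝ) : ℂ), ((w.im : ℝ) : ℂ), 0, 0⟩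

/-- The coefficientwise directional derivative of an `ℍ^ℂ`-valued map on `ℝ²`. -/
def qpd (v : ℝ × ℝ) (f : ℝ × ℝ → Quaternion ℂ) (p : ℝ × ℝ) : Quaternion ℂ :=
  ⟨fderiv ℝ (fun s => (f s).re) p v, fderiv ℝ (fun s => (f s).imI) p v,
   fderiv ℝ (fun s => (f s).imJ) p v, fderiv ℝ (fun s => (f s).imK) p v⟩

/-- `∂_z f := (1/2)(∂ₓ f − I·∂_y f)`, with `I·` the left multiplication by `I` in `ℍ^ℂ`. -/
def qdz (f : ℝ × ℝ → Quaternion ℂ) (p : ℝ × ℝ) : Quaternion ℂ :=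
  (2 : ℂ)⁻¹ • (qpd (1, 0) f p - Iq * qpd (0, 1) f p)

/-- `∂_z̄ f := (1/2)(∂ₓ f + I·∂_y f)`. -/
def qdzbar (f : ℝ × ℝ → Quaternion ℂ) (p : ℝ × ℝ) : Quaternion ℂ :=
  (2 : ℂ)⁻¹ • (qpd (1, 0) f p + Iq * qpd (0, 1) f p)

/-- Smoothness (coefficientwise) of an `ℍ^ℂ`-valued map on `ℝ²`. -/
def QSmooth (f : ℝ × ℝ → Quaternion ℂ) : Prop :=
  ContDiff ℝ (⊤ : ℕ∞) (fun p => (f p).re) ∧ ContDiff ℝ (⊤ : ℕ∞) (fun p => (f p).imI) ∧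
  ContDiff ℝ (⊤ : ℕ∞) (fun p => (f p).imJ) ∧ ContDiff ℝ (⊤ : ℕ∞) (fun p => (f p).imK)

/-- The real-valued function `r`, regarded as `ℂ_I`-valued (i.e. `ℍ^ℂ`-valued). -/
def rQ (r : ℝ) : Quaternion ℂ := ⟨((r : ℝ) : ℂ), 0, 0, 0⟩

/-- `L := {(1/2)(1+iI)(a+bJ) : a, b ∈ ℂ} ⊂ ℍ^ℂ`. -/
def Lset : Set (Quaternion ℂ) :=
  {g | ∃ a b : ℂ, g = (2 : ℂ)⁻¹ •
    ((⟨1, Complex.I, 0, 0⟩ : Quaternion ℂ) * (⟨a, 0, b, 0⟩ : Quaternion ℂ))}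

/-- For `g = (1/2)(1+iI)(a+bJ) ∈ L` (so that `a = 2·g.re`, `b = 2·g.imJ`), the squared norm
`|g|² := |a|² − |b|²`. -/
def LnormSq (g : Quaternion ℂ) : ℝ :=
  Complex.normSq (2 * g.re) - Complex.normSq (2 * g.imJ)

/-- The `g`-system: `∂_z g = (∂_z log √τ₀)·g + (Q₀/√τ₀)·J·ĝ·I` and
`∂_z̄ g = (√τ₀/4)·J·ĝ·I`, with the `ℂ_I`-valued Weierstrass data `(Q₀, τ₀)`. -/
def GSystem (τ₀ : ℝ × ℝ → ℝ) (Q₀ : ℝ × ℝ → ℂ) (g : ℝ × ℝ → Quaternion ℂ) : Prop :=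
  ∀ p : ℝ × ℝ,
    qdz g p = qdz (fun s => rQ (Real.log (Real.sqrt (τ₀ s)))) p * g p
        + (Real.sqrt (τ₀ p))⁻¹ • (cI (Q₀ p) * (Jq * qhat (g p) * Iq)) ∧
    qdzbar g p = (Real.sqrt (τ₀ p) / 4) • (Jq * qhat (g p) * Iq)

/-- `W := {α₀·1 + α₁I + iα₂J + iα₃K : α₀,…,α₃ ∈ ℝ} ⊂ ℍ^ℂ`. -/
def Wset : Set (Quaternion ℂ) :=
  {v | ∃ α₀ α₁ α₂ α₃ : ℝ,
    v = ⟨((α₀ : ℝ) : ℂ), ((α₁ : ℝ) : ℂ), Complex.I * (α₂ : ℂ), Complex.I * (α₃ : ℂ)⟩}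

/-- The complex bilinear norm `H(v,v) = v₀² + v₁² + v₂² + v₃²` of a complex quaternion;
for `v = α₀ + α₁I + iα₂J + iα₃K ∈ W` it equals the real number `α₀² + α₁² − α₂² − α₃²`. -/
def Hvv (v : Quaternion ℂ) : ℂ := v.re ^ 2 + v.imI ^ 2 + v.imJ ^ 2 + v.imK ^ 2

/-- The `v`-system: `∂_z v = (∂_z log √τ₀)·v + (i·Q₀/√τ₀)·J·v` and
`∂_z̄ v = (i·√τ₀/4)·J·v` (the spinor equation of `H = 1/2` surfaces in `ℝ^{1,2}`). -/
def VSystem (τ₀ : ℝ × ℝ → ℝ) (Q₀ : ℝ × ℝ → ℂ) (v : ℝ × ℝ → Quaternion ℂ) : Prop :=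
  ∀ p : ℝ × ℝ,
    qdz v p = qdz (fun s => rQ (Real.log (Real.sqrt (τ₀ s)))) p * v p
        + (Real.sqrt (τ₀ p))⁻¹ • (Complex.I • (cI (Q₀ p) * (Jq * v p))) ∧
    qdzbar v p = (Real.sqrt (τ₀ p) / 4) • (Complex.I • (Jq * v p))

/-!
Put `ρ = √τ₀ = e^u`, `A = ∂_z u`, `B = i Q₀/ρ`, `C = i ρ/4`, so that the system reads
`∂_z v = A v + B J v`, `∂_z̄ v = C J v` with `A, B, C` in the commutant `ℂ_I ⊗ ℂ` of `I`.
Since `J` anticommutes with `I`, `∂_z (J f) = J ∂_z̄ f`, and `J x = x̂ J` with `x̂ = J x J⁻¹`.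
Expanding `∂_z̄ ∂_z v = ∂_z ∂_z̄ v` gives `(X + Y J) v = 0` with `X, Y` in the commutant of `I`;
as `v` is invertible (`H(v,v) ≠ 0`), `X = Y = 0`.  `X = 0` reads
`∂_z̄ A = B B̂ − C Ĉ = −|Q₀|²/τ₀ + τ₀/16`, and in `Y = 0` the chain rule
`∂ e^{±u} = ±e^{±u} ∂u` cancels everything except `(i/ρ) ∂_z̄ Q₀`.
-/

open Quaternion

section Algebra

@[simp] lemma Iq_re : Iq.re = 0 := rfl
@[simp] lemma Iq_imI : Iq.imI = 1 := rfl
@[simp] lemma Iq_imJ : Iq.imJ = 0 := rfl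
@[simp] lemma Iq_imK : Iq.imK = 0 := rfl
@[simp] lemma Jq_re : Jq.re = 0 := rfl
@[simp] lemma Jq_imI : Jq.imI = 0 := rfl
@[simp] lemma Jq_imJ : Jq.imJ = 1 := rfl
@[simp] lemma Jq_imK : Jq.imK = 0 := rfl
@[simp] lemma rQ_re (r : ℝ) : (rQ r).re = r := rfl
@[simp] lemma rQ_imI (r : ℝ) : (rQ r).imI = 0 := rfl
@[simp] lemma rQ_imJ (r : ℝ) : (rQ r).imJ = 0 := rfl
@[simp] lemma rQ_imK (r : ℝ) : (rQ r).imK = 0 := rfl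
@[simp] lemma cI_re (w : ℂ) : (cI w).re = w.re := rfl
@[simp] lemma cI_imI (w : ℂ) : (cI w).imI = w.im := rfl
@[simp] lemma cI_imJ (w : ℂ) : (cI w).imJ = 0 := rfl
@[simp] lemma cI_imK (w : ℂ) : (cI w).imK = 0 := rfl

lemma commute_Iq_iff {x : ℍ[ℂ]} : Commute Iq x ↔ x.imJ = 0 ∧ x.imK = 0 := by
  simp only [Commute, SemiconjBy, Quaternion.ext_iff, Quaternion.re_mul, Quaternion.imI_mul,
    Quaternion.imJ_mul, Quaternion.imK_mul, Iq_re, Iq_imI, Iq_imJ, Iq_imK]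
  constructor
  · rintro ⟨-, -, hJ, hK⟩
    constructor
    · linear_combination hK / 2
    · linear_combination -hJ / 2
  · rintro ⟨hJ, hK⟩
    simp [hJ, hK]

lemma commute_Iq_rQ (r : ℝ) : Commute Iq (rQ r) := commute_Iq_iff.2 ⟨rfl, rfl⟩

lemma commute_Iq_cI (w : ℂ) : Commute Iq (cI w) := commute_Iq_iff.2 ⟨rfl, rfl⟩

/-- Conjugation `x ↦ J x J⁻¹`. -/
def jconj (x : ℍ[ℂ]) : ℍ[ℂ] := ⟨x.re, -x.imI, x.imJ, -x.imK⟩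

@[simp] lemma jconj_re (x : ℍ[ℂ]) : (jconj x).re = x.re := rfl
@[simp] lemma jconj_imI (x : ℍ[ℂ]) : (jconj x).imI = -x.imI := rfl
@[simp] lemma jconj_imJ (x : ℍ[ℂ]) : (jconj x).imJ = x.imJ := rfl
@[simp] lemma jconj_imK (x : ℍ[ℂ]) : (jconj x).imK = -x.imK := rfl

lemma Commute.jconj_Iq {x : ℍ[ℂ]} (hx : Commute Iq x) : Commute Iq (jconj x) := by
  rw [commute_Iq_iff] at hx ⊢
  simp [hx]

lemma eq_zero_of_mul_eq_zero_of_Hvv_ne_zero {w x : ℍ[ℂ]} (h : w * x = 0) (hx : Hvv x ≠ 0) :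
    w = 0 := by
  have hw : Quaternion.normSq x • w = 0 := by
    rw [← Quaternion.mul_coe_eq_smul, ← Quaternion.self_mul_star, ← mul_assoc, h, zero_mul]
  exact (smul_eq_zero.1 hw).resolve_left (by rwa [Quaternion.normSq_def'])

lemma eq_zero_of_add_mul_Jq_eq_zero {X Y : ℍ[ℂ]} (hX : Commute Iq X) (hY : Commute Iq Y)
    (h : X + Y * Jq = 0) : X = 0 ∧ Y = 0 := by
  rw [commute_Iq_iff] at hX hY
  simp only [Quaternion.ext_iff, Quaternion.re_add, Quaternion.imI_add, Quaternion.imJ_add,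
    Quaternion.imK_add, Quaternion.re_mul, Quaternion.imI_mul, Quaternion.imJ_mul,
    Quaternion.imK_mul] at h
  simp_all [Quaternion.ext_iff]

end Algebra

lemma fderiv_fderiv_apply_comm {E F : Type*} [NormedAddCommGroup E] [NormedSpace ℝ E]
    [NormedAddCommGroup F] [NormedSpace ℝ F] {g : E → F} {p : E} (hg : ContDiffAt ℝ 2 g p)
    (d e : E) :
    fderiv ℝ (fun s => fderiv ℝ g s e) p d = fderiv ℝ (fun s => fderiv ℝ g s d) p e := by
  have hd : DifferentiableAt ℝ (fderiv ℝ g) p :=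
    (hg.fderiv_right (m := 1) (by norm_num)).differentiableAt (by norm_num)
  rw [fderiv_clm_apply hd (differentiableAt_const e),
    fderiv_clm_apply hd (differentiableAt_const d)]
  simpa using hg.isSymmSndFDerivAt (by simp) d e

def QDifferentiableAt (f : ℝ × ℝ → ℍ[ℂ]) (p : ℝ × ℝ) : Prop :=
  DifferentiableAt ℝ (fun s => (f s).re) p ∧ DifferentiableAt ℝ (fun s => (f s).imI) p ∧
    DifferentiableAt ℝ (fun s => (f s).imJ) p ∧ DifferentiableAt ℝ (fun s => (f s).imK) p

section PartialDerivatives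

variable {f g : ℝ × ℝ → ℍ[ℂ]} {p : ℝ × ℝ}

lemma QSmooth.qDifferentiableAt (hf : QSmooth f) (p : ℝ × ℝ) : QDifferentiableAt f p := by
  obtain ⟨h₁, h₂, h₃, h₄⟩ := hf
  exact ⟨h₁.differentiable (by simp) p, h₂.differentiable (by simp) p,
    h₃.differentiable (by simp) p, h₄.differentiable (by simp) p⟩

lemma qDifferentiableAt_const (c : ℍ[ℂ]) : QDifferentiableAt (fun _ => c) p :=
  ⟨differentiableAt_const _, differentiableAt_const _, differentiableAt_const _,
    differentiableAt_const _⟩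

lemma QDifferentiableAt.add (hf : QDifferentiableAt f p) (hg : QDifferentiableAt g p) :
    QDifferentiableAt (fun s => f s + g s) p := by
  obtain ⟨hf₁, hf₂, hf₃, hf₄⟩ := hf
  obtain ⟨hg₁, hg₂, hg₃, hg₄⟩ := hg
  exact ⟨hf₁.add hg₁, hf₂.add hg₂, hf₃.add hg₃, hf₄.add hg₄⟩

lemma QDifferentiableAt.sub (hf : QDifferentiableAt f p) (hg : QDifferentiableAt g p) :
    QDifferentiableAt (fun s => f s - g s) p := by
  obtain ⟨hf₁, hf₂, hf₃, hf₄⟩ := hf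
  obtain ⟨hg₁, hg₂, hg₃, hg₄⟩ := hg
  exact ⟨hf₁.sub hg₁, hf₂.sub hg₂, hf₃.sub hg₃, hf₄.sub hg₄⟩

lemma QDifferentiableAt.smul (c : ℂ) (hf : QDifferentiableAt f p) :
    QDifferentiableAt (fun s => c • f s) p := by
  obtain ⟨hf₁, hf₂, hf₃, hf₄⟩ := hf
  exact ⟨hf₁.const_mul c, hf₂.const_mul c, hf₃.const_mul c, hf₄.const_mul c⟩

lemma QDifferentiableAt.mul (hf : QDifferentiableAt f p) (hg : QDifferentiableAt g p) :
    QDifferentiableAt (fun s => f s * g s) p := by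
  obtain ⟨hf₁, hf₂, hf₃, hf₄⟩ := hf
  obtain ⟨hg₁, hg₂, hg₃, hg₄⟩ := hg
  refine ⟨?_, ?_, ?_, ?_⟩ <;>
    simp only [Quaternion.re_mul, Quaternion.imI_mul, Quaternion.imJ_mul, Quaternion.imK_mul] <;>
    fun_prop

@[simp] lemma qpd_re (d : ℝ × ℝ) : (qpd d f p).re = fderiv ℝ (fun s => (f s).re) p d := rfl
@[simp] lemma qpd_imI (d : ℝ × ℝ) : (qpd d f p).imI = fderiv ℝ (fun s => (f s).imI) p d := rfl
@[simp] lemma qpd_imJ (d : ℝ × ℝ) : (qpd d f p).imJ = fderiv ℝ (fun s => (f s).imJ) p d := rfl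
@[simp] lemma qpd_imK (d : ℝ × ℝ) : (qpd d f p).imK = fderiv ℝ (fun s => (f s).imK) p d := rfl

lemma qpd_const (d : ℝ × ℝ) (c : ℍ[ℂ]) : qpd d (fun _ => c) p = 0 := by
  ext <;> simp

lemma qpd_add (d : ℝ × ℝ) (hf : QDifferentiableAt f p) (hg : QDifferentiableAt g p) :
    qpd d (fun s => f s + g s) p = qpd d f p + qpd d g p := by
  obtain ⟨hf₁, hf₂, hf₃, hf₄⟩ := hf
  obtain ⟨hg₁, hg₂, hg₃, hg₄⟩ := hg
  ext <;> simp [fderiv_fun_add, *]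

lemma qpd_sub (d : ℝ × ℝ) (hf : QDifferentiableAt f p) (hg : QDifferentiableAt g p) :
    qpd d (fun s => f s - g s) p = qpd d f p - qpd d g p := by
  obtain ⟨hf₁, hf₂, hf₃, hf₄⟩ := hf
  obtain ⟨hg₁, hg₂, hg₃, hg₄⟩ := hg
  ext <;> simp [fderiv_fun_sub, *]

lemma qpd_smul (d : ℝ × ℝ) (c : ℂ) (hf : QDifferentiableAt f p) :
    qpd d (fun s => c • f s) p = c • qpd d f p := by
  obtain ⟨hf₁, hf₂, hf₃, hf₄⟩ := hf
  ext <;> simp [fderiv_const_mul, *]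

lemma qpd_mul (d : ℝ × ℝ) (hf : QDifferentiableAt f p) (hg : QDifferentiableAt g p) :
    qpd d (fun s => f s * g s) p = qpd d f p * g p + f p * qpd d g p := by
  obtain ⟨hf₁, hf₂, hf₃, hf₄⟩ := hf
  obtain ⟨hg₁, hg₂, hg₃, hg₄⟩ := hg
  ext <;> simp (disch := fun_prop) only [qpd_re, qpd_imI, qpd_imJ, qpd_imK, Quaternion.re_mul,
    Quaternion.imI_mul, Quaternion.imJ_mul, Quaternion.imK_mul, Quaternion.re_add,
    Quaternion.imI_add, Quaternion.imJ_add, Quaternion.imK_add, fderiv_fun_add, fderiv_fun_sub,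
    fderiv_fun_mul, add_apply, sub_apply, smul_apply, smul_eq_mul] <;> ring

lemma qpd_const_mul (d : ℝ × ℝ) (c : ℍ[ℂ]) (hf : QDifferentiableAt f p) :
    qpd d (fun s => c * f s) p = c * qpd d f p := by
  simpa [qpd_const] using qpd_mul d (qDifferentiableAt_const c) hf

lemma QSmooth.qpd (hf : QSmooth f) (d : ℝ × ℝ) : QSmooth (qpd d f) := by
  obtain ⟨h₁, h₂, h₃, h₄⟩ := hf
  exact ⟨(h₁.fderiv_right (by exact_mod_cast le_top)).clm_apply contDiff_const,
    (h₂.fderiv_right (by exact_mod_cast le_top)).clm_apply contDiff_const,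
    (h₃.fderiv_right (by exact_mod_cast le_top)).clm_apply contDiff_const,
    (h₄.fderiv_right (by exact_mod_cast le_top)).clm_apply contDiff_const⟩

lemma qpd_comm (hf : QSmooth f) (d e : ℝ × ℝ) (p : ℝ × ℝ) :
    qpd d (qpd e f) p = qpd e (qpd d f) p := by
  obtain ⟨h₁, h₂, h₃, h₄⟩ := hf
  ext <;> simp only [qpd_re, qpd_imI, qpd_imJ, qpd_imK] <;> apply fderiv_fderiv_apply_comm
  all_goals apply ContDiffAt.of_le _ (WithTop.coe_le_coe.2 le_top)
  exacts [h₁.contDiffAt, h₂.contDiffAt, h₃.contDiffAt, h₄.contDiffAt]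

lemma commute_Iq_qpd (d : ℝ × ℝ) (hf : ∀ s, Commute Iq (f s)) : Commute Iq (qpd d f p) := by
  simp only [commute_Iq_iff] at hf ⊢
  simp [funext fun s => (hf s).1, funext fun s => (hf s).2]

end PartialDerivatives

section Wirtinger

variable {f g : ℝ × ℝ → ℍ[ℂ]} {p : ℝ × ℝ}

lemma qdzbar_add (hf : QDifferentiableAt f p) (hg : QDifferentiableAt g p) :
    qdzbar (fun s => f s + g s) p = qdzbar f p + qdzbar g p := by
  rw [qdzbar, qdzbar, qdzbar, qpd_add _ hf hg, qpd_add _ hf hg]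
  ext <;> simp <;> ring

lemma qdz_smul (c : ℂ) (hf : QDifferentiableAt f p) :
    qdz (fun s => c • f s) p = c • qdz f p := by
  rw [qdz, qdz, qpd_smul _ c hf, qpd_smul _ c hf]
  ext <;> simp <;> ring

lemma qdzbar_smul (c : ℂ) (hf : QDifferentiableAt f p) :
    qdzbar (fun s => c • f s) p = c • qdzbar f p := by
  rw [qdzbar, qdzbar, qpd_smul _ c hf, qpd_smul _ c hf]
  ext <;> simp <;> ring

lemma qdz_mul (hf : QDifferentiableAt f p) (hg : QDifferentiableAt g p)
    (hfI : Commute Iq (f p)) : qdz (fun s => f s * g s) p = qdz f p * g p + f p * qdz g p := by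
  rw [commute_Iq_iff] at hfI
  rw [qdz, qdz, qdz, qpd_mul _ hf hg, qpd_mul _ hf hg]
  ext <;> simp [hfI] <;> ring

lemma qdzbar_mul (hf : QDifferentiableAt f p) (hg : QDifferentiableAt g p)
    (hfI : Commute Iq (f p)) :
    qdzbar (fun s => f s * g s) p = qdzbar f p * g p + f p * qdzbar g p := by
  rw [commute_Iq_iff] at hfI
  rw [qdzbar, qdzbar, qdzbar, qpd_mul _ hf hg, qpd_mul _ hf hg]
  ext <;> simp [hfI] <;> ring

lemma qdz_Jq_mul (hf : QDifferentiableAt f p) :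
    qdz (fun s => Jq * f s) p = Jq * qdzbar f p := by
  rw [qdz, qdzbar, qpd_const_mul _ _ hf, qpd_const_mul _ _ hf]
  ext <;> simp <;> ring

lemma qdzbar_Jq_mul (hf : QDifferentiableAt f p) :
    qdzbar (fun s => Jq * f s) p = Jq * qdz f p := by
  rw [qdz, qdzbar, qpd_const_mul _ _ hf, qpd_const_mul _ _ hf]
  ext <;> simp <;> ring

lemma commute_Iq_qdz (hf : ∀ s, Commute Iq (f s)) : Commute Iq (qdz f p) := by
  rw [qdz, ← Quaternion.coe_mul_eq_smul]
  exact (Quaternion.coe_commute _ _).symm.mul_right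
    ((commute_Iq_qpd _ hf).sub_right ((Commute.refl Iq).mul_right (commute_Iq_qpd _ hf)))

lemma commute_Iq_qdzbar (hf : ∀ s, Commute Iq (f s)) : Commute Iq (qdzbar f p) := by
  rw [qdzbar, ← Quaternion.coe_mul_eq_smul]
  exact (Quaternion.coe_commute _ _).symm.mul_right
    ((commute_Iq_qpd _ hf).add_right ((Commute.refl Iq).mul_right (commute_Iq_qpd _ hf)))

lemma QSmooth.qDifferentiableAt_qdz (hf : QSmooth f) (p : ℝ × ℝ) :
    QDifferentiableAt (qdz f) p :=
  (((hf.qpd _).qDifferentiableAt p).sub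
    ((qDifferentiableAt_const Iq).mul ((hf.qpd _).qDifferentiableAt p))).smul _

lemma qpd_qdz (hf : QSmooth f) (d p : ℝ × ℝ) : qpd d (qdz f) p = qdz (qpd d f) p := by
  have h₁ := (hf.qpd (1, 0)).qDifferentiableAt p
  have h₂ := (qDifferentiableAt_const Iq).mul ((hf.qpd (0, 1)).qDifferentiableAt p)
  change qpd d (fun s => (2 : ℂ)⁻¹ • (qpd (1, 0) f s - Iq * qpd (0, 1) f s)) p = _
  rw [qpd_smul _ _ (h₁.sub h₂), qpd_sub _ h₁ h₂,
    qpd_const_mul _ _ ((hf.qpd _).qDifferentiableAt p), qdz, qpd_comm hf, qpd_comm hf d]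

lemma qpd_qdzbar (hf : QSmooth f) (d p : ℝ × ℝ) : qpd d (qdzbar f) p = qdzbar (qpd d f) p := by
  have h₁ := (hf.qpd (1, 0)).qDifferentiableAt p
  have h₂ := (qDifferentiableAt_const Iq).mul ((hf.qpd (0, 1)).qDifferentiableAt p)
  change qpd d (fun s => (2 : ℂ)⁻¹ • (qpd (1, 0) f s + Iq * qpd (0, 1) f s)) p = _
  rw [qpd_smul _ _ (h₁.add h₂), qpd_add _ h₁ h₂,
    qpd_const_mul _ _ ((hf.qpd _).qDifferentiableAt p), qdzbar, qpd_comm hf, qpd_comm hf d]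

lemma qdzbar_qdz_comm (hf : QSmooth f) (p : ℝ × ℝ) : qdzbar (qdz f) p = qdz (qdzbar f) p := by
  rw [qdzbar, qdz, qpd_qdz hf, qpd_qdz hf, qpd_qdzbar hf, qpd_qdzbar hf]
  simp only [qdz, qdzbar, qpd_comm hf (0, 1) (1, 0)]
  ext <;> simp <;> ring

end Wirtinger

section ScalarFunctions

variable {g : ℝ × ℝ → ℝ} {p : ℝ × ℝ}

lemma qSmooth_rQ (hg : ContDiff ℝ (⊤ : ℕ∞) g) : QSmooth (fun s => rQ (g s)) :=
  ⟨Complex.ofRealCLM.contDiff.comp hg, contDiff_const, contDiff_const, contDiff_const⟩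

lemma qDifferentiableAt_rQ (hg : DifferentiableAt ℝ g p) :
    QDifferentiableAt (fun s => rQ (g s)) p :=
  ⟨Complex.ofRealCLM.differentiableAt.comp p hg, differentiableAt_const _,
    differentiableAt_const _, differentiableAt_const _⟩

lemma qDifferentiableAt_cI {w : ℝ × ℝ → ℂ} (hw : DifferentiableAt ℝ w p) :
    QDifferentiableAt (fun s => cI (w s)) p :=
  ⟨Complex.ofRealCLM.differentiableAt.comp p (Complex.reCLM.differentiableAt.comp p hw),
    Complex.ofRealCLM.differentiableAt.comp p (Complex.imCLM.differentiableAt.comp p hw),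
    differentiableAt_const _, differentiableAt_const _⟩

lemma qpd_rQ (d : ℝ × ℝ) (hg : DifferentiableAt ℝ g p) :
    qpd d (fun s => rQ (g s)) p = rQ (fderiv ℝ g p d) := by
  have h : fderiv ℝ (fun s => (g s : ℂ)) p = Complex.ofRealCLM.comp (fderiv ℝ g p) :=
    (Complex.ofRealCLM.hasFDerivAt.comp p hg.hasFDerivAt).fderiv
  ext <;> simp [h]

lemma qpd_rQ_comp (d : ℝ × ℝ) {φ : ℝ → ℝ} (hφ : DifferentiableAt ℝ φ (g p))
    (hg : DifferentiableAt ℝ g p) :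
    qpd d (fun s => rQ (φ (g s))) p = rQ (deriv φ (g p)) * qpd d (fun s => rQ (g s)) p := by
  have h : HasFDerivAt (fun s => φ (g s)) (deriv φ (g p) • fderiv ℝ g p) p :=
    hφ.hasDerivAt.comp_hasFDerivAt p hg.hasFDerivAt
  rw [qpd_rQ d h.differentiableAt, qpd_rQ d hg, h.fderiv]
  ext <;> simp

lemma qdz_rQ_comp {φ : ℝ → ℝ} (hφ : DifferentiableAt ℝ φ (g p)) (hg : DifferentiableAt ℝ g p) :
    qdz (fun s => rQ (φ (g s))) p = rQ (deriv φ (g p)) * qdz (fun s => rQ (g s)) p := by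
  rw [qdz, qdz, qpd_rQ_comp _ hφ hg, qpd_rQ_comp _ hφ hg]
  ext <;> simp <;> ring

lemma qdzbar_rQ_comp {φ : ℝ → ℝ} (hφ : DifferentiableAt ℝ φ (g p))
    (hg : DifferentiableAt ℝ g p) :
    qdzbar (fun s => rQ (φ (g s))) p = rQ (deriv φ (g p)) * qdzbar (fun s => rQ (g s)) p := by
  rw [qdzbar, qdzbar, qpd_rQ_comp _ hφ hg, qpd_rQ_comp _ hφ hg]
  ext <;> simp <;> ring

lemma jconj_qdz_rQ (g : ℝ × ℝ → ℝ) (p : ℝ × ℝ) :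
    jconj (qdz (fun s => rQ (g s)) p) = qdzbar (fun s => rQ (g s)) p := by
  ext <;> simp [qdz, qdzbar]

end ScalarFunctions

theorem compatibility_of_qdz_qdzbar_system {v A B C : ℝ × ℝ → ℍ[ℂ]} {p : ℝ × ℝ}
    (hv : QSmooth v) (hA : QDifferentiableAt A p) (hB : QDifferentiableAt B p)
    (hC : QDifferentiableAt C p) (hAI : ∀ s, Commute Iq (A s)) (hBI : ∀ s, Commute Iq (B s))
    (hCI : ∀ s, Commute Iq (C s)) (hz : ∀ s, qdz v s = A s * v s + B s * (Jq * v s))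
    (hzbar : ∀ s, qdzbar v s = C s * (Jq * v s)) (hvp : Hvv (v p) ≠ 0) :
    qdzbar A p = B p * jconj (B p) - C p * jconj (C p) ∧
      qdzbar B p = qdz C p - A p * C p - B p * jconj (A p) := by
  have hv' := hv.qDifferentiableAt p
  have hJv := (qDifferentiableAt_const Jq).mul hv'
  have hzbarz : qdzbar (qdz v) p = qdzbar A p * v p + A p * (C p * (Jq * v p))
      + (qdzbar B p * (Jq * v p) + B p * (Jq * (A p * v p + B p * (Jq * v p)))) := by
    rw [funext hz, qdzbar_add (hA.mul hv') (hB.mul hJv), qdzbar_mul hA hv' (hAI p),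
      qdzbar_mul hB hJv (hBI p), qdzbar_Jq_mul hv', hzbar, hz]
  have hzzbar : qdz (qdzbar v) p = qdz C p * (Jq * v p) + C p * (Jq * (C p * (Jq * v p))) := by
    rw [funext hzbar, qdz_mul hC hJv (hCI p), qdz_Jq_mul hv', hzbar]
  set X := qdzbar A p - B p * jconj (B p) + C p * jconj (C p)
  set Y := A p * C p + qdzbar B p + B p * jconj (A p) - qdz C p
  -- move every `J` to the right, using `J x = jconj x · J` and `J² = -1`
  have hXY : (X + Y * Jq) * v p = qdzbar (qdz v) p - qdz (qdzbar v) p := by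
    rw [hzbarz, hzzbar]
    ext <;> simp [X, Y] <;> ring
  have hXI : Commute Iq X := ((commute_Iq_qdzbar hAI).sub_right ((hBI p).mul_right
    (hBI p).jconj_Iq)).add_right ((hCI p).mul_right (hCI p).jconj_Iq)
  have hYI : Commute Iq Y := ((((hAI p).mul_right (hCI p)).add_right
    (commute_Iq_qdzbar hBI)).add_right ((hBI p).mul_right (hAI p).jconj_Iq)).sub_right
    (commute_Iq_qdz hCI)
  obtain ⟨hX, hY⟩ := eq_zero_of_add_mul_Jq_eq_zero hXI hYI
    (eq_zero_of_mul_eq_zero_of_Hvv_ne_zero (by rw [hXY, qdzbar_qdz_comm hv, sub_self]) hvp)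
  constructor
  · rw [← sub_eq_zero, ← hX]; simp only [X]; abel
  · rw [← sub_eq_zero, ← hY]; simp only [Y]; abel

section VSystem

variable {ρ : ℝ × ℝ → ℝ} {Q₀ : ℝ × ℝ → ℂ} {p : ℝ × ℝ}

def vCoeffZ (ρ : ℝ × ℝ → ℝ) (Q₀ : ℝ × ℝ → ℂ) : ℝ × ℝ → ℍ[ℂ] :=
  fun s => Complex.I • (rQ (ρ s)⁻¹ * cI (Q₀ s))

def vCoeffZbar (ρ : ℝ × ℝ → ℝ) : ℝ × ℝ → ℍ[ℂ] := fun s => (Complex.I / 4) • rQ (ρ s)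

lemma commute_Iq_vCoeffZ (s : ℝ × ℝ) : Commute Iq (vCoeffZ ρ Q₀ s) :=
  commute_Iq_iff.2 (by simp [vCoeffZ])

lemma commute_Iq_vCoeffZbar (s : ℝ × ℝ) : Commute Iq (vCoeffZbar ρ s) :=
  commute_Iq_iff.2 (by simp [vCoeffZbar])

lemma qDifferentiableAt_vCoeffZ (hρpos : ∀ s, 0 < ρ s) (hρ : DifferentiableAt ℝ ρ p)
    (hQ : DifferentiableAt ℝ Q₀ p) : QDifferentiableAt (vCoeffZ ρ Q₀) p :=
  ((qDifferentiableAt_rQ (hρ.inv (hρpos p).ne')).mul (qDifferentiableAt_cI hQ)).smul _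

lemma qDifferentiableAt_vCoeffZbar (hρ : DifferentiableAt ℝ ρ p) :
    QDifferentiableAt (vCoeffZbar ρ) p :=
  (qDifferentiableAt_rQ hρ).smul _

lemma qdz_vCoeffZbar (hρpos : ∀ s, 0 < ρ s) (hρ : DifferentiableAt ℝ ρ p) :
    qdz (vCoeffZbar ρ) p = vCoeffZbar ρ p * qdz (fun s => rQ (Real.log (ρ s))) p := by
  have hexp : (fun s => rQ (ρ s)) = fun s => rQ (Real.exp (Real.log (ρ s))) :=
    funext fun s => by rw [Real.exp_log (hρpos s)]
  unfold vCoeffZbar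
  rw [qdz_smul _ (qDifferentiableAt_rQ hρ), hexp,
    qdz_rQ_comp Real.differentiableAt_exp (hρ.log (hρpos p).ne'), Real.deriv_exp,
    Real.exp_log (hρpos p)]
  ext <;> simp <;> ring

lemma qdzbar_vCoeffZ (hρpos : ∀ s, 0 < ρ s) (hρ : DifferentiableAt ℝ ρ p)
    (hQ : DifferentiableAt ℝ Q₀ p) :
    qdzbar (vCoeffZ ρ Q₀) p = Complex.I • (rQ (-(ρ p)⁻¹) * qdzbar (fun s => rQ (Real.log (ρ s))) p
      * cI (Q₀ p) + rQ (ρ p)⁻¹ * qdzbar (fun s => cI (Q₀ s)) p) := by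
  have hR : QDifferentiableAt (fun s => rQ (ρ s)⁻¹) p :=
    qDifferentiableAt_rQ (hρ.inv (hρpos p).ne')
  have hq := qDifferentiableAt_cI hQ
  have hexp : (fun s => rQ (ρ s)⁻¹) = fun s => rQ (Real.exp (-Real.log (ρ s))) :=
    funext fun s => by rw [Real.exp_neg, Real.exp_log (hρpos s)]
  have hderiv : deriv (fun t => Real.exp (-t)) (Real.log (ρ p)) = -(ρ p)⁻¹ := by
    have h : HasDerivAt (fun t => Real.exp (-t)) (Real.exp (-Real.log (ρ p)) * -1)
        (Real.log (ρ p)) := (Real.hasDerivAt_exp _).comp _ (hasDerivAt_neg _)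
    rw [h.deriv, Real.exp_neg, Real.exp_log (hρpos p)]
    ring
  unfold vCoeffZ
  rw [qdzbar_smul _ (hR.mul hq), qdzbar_mul hR hq (commute_Iq_rQ _), hexp,
    qdzbar_rQ_comp (φ := fun t => Real.exp (-t)) (by fun_prop) (hρ.log (hρpos p).ne'), hderiv]

lemma vCoeffZ_mul_jconj_sub :
    vCoeffZ ρ Q₀ p * jconj (vCoeffZ ρ Q₀ p) - vCoeffZbar ρ p * jconj (vCoeffZbar ρ p)
      = rQ (-(Complex.normSq (Q₀ p)) / ρ p ^ 2 + ρ p ^ 2 / 16) := by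
  ext <;> simp [vCoeffZ, vCoeffZbar, Complex.normSq_apply]
  · linear_combination (((Q₀ p).re ^ 2 + (Q₀ p).im ^ 2 : ℂ) / (ρ p : ℂ) ^ 2 - (ρ p : ℂ) ^ 2 / 16)
      * Complex.I_sq
  · ring

lemma qdzbar_cI_eq_zero_of_qdzbar_vCoeffZ_eq (hρpos : ∀ s, 0 < ρ s)
    (hρ : DifferentiableAt ℝ ρ p) (hQ : DifferentiableAt ℝ Q₀ p)
    (h : qdzbar (vCoeffZ ρ Q₀) p = qdz (vCoeffZbar ρ) p
      - qdz (fun s => rQ (Real.log (ρ s))) p * vCoeffZbar ρ p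
      - vCoeffZ ρ Q₀ p * jconj (qdz (fun s => rQ (Real.log (ρ s))) p)) :
    qdzbar (fun s => cI (Q₀ s)) p = 0 := by
  -- all that survives of `h` is `(i/ρ) ∂_z̄ Q₀ = 0`
  rw [qdzbar_vCoeffZ hρpos hρ hQ, qdz_vCoeffZbar hρpos hρ, jconj_qdz_rQ] at h
  have hAI := commute_Iq_iff.1 (commute_Iq_qdz (p := p) fun s => commute_Iq_rQ (Real.log (ρ s)))
  have hAbarI := commute_Iq_iff.1
    (commute_Iq_qdzbar (p := p) fun s => commute_Iq_rQ (Real.log (ρ s)))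
  have hQI := commute_Iq_iff.1 (commute_Iq_qdzbar (p := p) fun s => commute_Iq_cI (Q₀ s))
  have hre := congrArg QuaternionAlgebra.re h
  have himI := congrArg QuaternionAlgebra.imI h
  simp only [vCoeffZ, vCoeffZbar, smul_add, re_add, re_sub, re_smul, re_mul, imI_add, imI_sub,
    imI_smul, imI_mul, imJ_smul, imJ_mul, imK_smul, imK_mul, rQ_re, rQ_imI, rQ_imJ, rQ_imK, cI_re,
    cI_imI, cI_imJ, cI_imK, hAI, hAbarI, Complex.ofReal_neg, Complex.ofReal_inv, neg_mul,
    zero_mul, mul_zero, sub_zero, add_zero, zero_add, sub_neg_eq_add, sub_self, smul_eq_mul]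
    at hre himI
  have hre' : Complex.I * (ρ p : ℂ)⁻¹ * (qdzbar (fun s => cI (Q₀ s)) p).re = 0 := by
    linear_combination hre
  have himI' : Complex.I * (ρ p : ℂ)⁻¹ * (qdzbar (fun s => cI (Q₀ s)) p).imI = 0 := by
    linear_combination himI
  simp only [mul_eq_zero, Complex.I_ne_zero, inv_eq_zero, Complex.ofReal_eq_zero,
    (hρpos p).ne', false_or] at hre' himI'
  ext
  exacts [hre', himI', hQI.1, hQI.2]

end VSystem

theorem compatibility_of_vSystem {ρ : ℝ × ℝ → ℝ} (hρ : ContDiff ℝ (⊤ : ℕ∞) ρ)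
    (hρpos : ∀ p, 0 < ρ p) {Q₀ : ℝ × ℝ → ℂ} (hQ : ContDiff ℝ (⊤ : ℕ∞) Q₀)
    {v : ℝ × ℝ → ℍ[ℂ]} (hv : QSmooth v) (hvnz : ∀ p, Hvv (v p) ≠ 0)
    (hsys : ∀ p, qdz v p = qdz (fun s => rQ (Real.log (ρ s))) p * v p
        + (ρ p)⁻¹ • (Complex.I • (cI (Q₀ p) * (Jq * v p))) ∧
      qdzbar v p = (ρ p / 4) • (Complex.I • (Jq * v p))) (p : ℝ × ℝ) :
    qdzbar (fun s => cI (Q₀ s)) p = 0 ∧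
      qdz (fun s => qdzbar (fun r => rQ (Real.log (ρ r))) s) p
        = rQ (-(Complex.normSq (Q₀ p)) / ρ p ^ 2 + ρ p ^ 2 / 16) := by
  set U : ℝ × ℝ → ℍ[ℂ] := fun s => rQ (Real.log (ρ s))
  have hU : QSmooth U := qSmooth_rQ (hρ.log fun s => (hρpos s).ne')
  have hρd : DifferentiableAt ℝ ρ p := hρ.differentiable (by simp) p
  have hQd : DifferentiableAt ℝ Q₀ p := hQ.differentiable (by simp) p
  have hUI : ∀ s, Commute Iq (U s) := fun s => commute_Iq_rQ _
  have hz : ∀ s, qdz v s = qdz U s * v s + vCoeffZ ρ Q₀ s * (Jq * v s) := fun s => by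
    rw [(hsys s).1]
    congr 1
    ext <;> simp [vCoeffZ] <;> ring
  have hzbar : ∀ s, qdzbar v s = vCoeffZbar ρ s * (Jq * v s) := fun s => by
    rw [(hsys s).2]
    ext <;> simp [vCoeffZbar] <;> ring
  obtain ⟨hX, hY⟩ := compatibility_of_qdz_qdzbar_system hv (hU.qDifferentiableAt_qdz p)
    (qDifferentiableAt_vCoeffZ hρpos hρd hQd) (qDifferentiableAt_vCoeffZbar hρd)
    (fun s => commute_Iq_qdz hUI) commute_Iq_vCoeffZ
    commute_Iq_vCoeffZbar hz hzbar (hvnz p)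
  refine ⟨qdzbar_cI_eq_zero_of_qdzbar_vCoeffZ_eq hρpos hρd hQd hY, ?_⟩
  rw [← vCoeffZ_mul_jconj_sub, ← hX]
  exact (qdzbar_qdz_comm hU p).symm

theorem stmt13_general (τ₀ : ℝ × ℝ → ℝ) (Q₀ : ℝ × ℝ → ℂ)
    (hτ : ContDiff ℝ (⊤ : ℕ∞) τ₀) (hτpos : ∀ p, 0 < τ₀ p)
    (hQ : ContDiff ℝ (⊤ : ℕ∞) Q₀)
    (v : ℝ × ℝ → Quaternion ℂ) (hvs : QSmooth v)
    (hvnz : ∀ p, Hvv (v p) ≠ 0) (hsys : VSystem τ₀ Q₀ v) :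
    (∀ p, qdzbar (fun s => cI (Q₀ s)) p = 0) ∧
    (∀ p, qdz (fun s => qdzbar (fun r => rQ (Real.log (Real.sqrt (τ₀ r)))) s) p
        = rQ (-(Complex.normSq (Q₀ p)) / τ₀ p + τ₀ p / 16)) := by
  have key := compatibility_of_vSystem (hτ.sqrt fun s => (hτpos s).ne')
    (fun s => Real.sqrt_pos.2 (hτpos s)) hQ hvs hvnz hsys
  refine ⟨fun p => (key p).1, fun p => ?_⟩
  rw [(key p).2, Real.sq_sqrt (hτpos p).le]

/-- If `v : ℝ² → W` is smooth with `H(v,v)` nowhere vanishing and satisfies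
the `v`-system for smooth data `τ₀ : ℝ² → (0,∞)`, `Q₀ : ℝ² → ℂ_I`, then `∂_z̄ Q₀ = 0`
(`Q₀` is `I`-holomorphic) and `∂_z(∂_z̄(log √τ₀)) = −|Q₀|²/τ₀ + τ₀/16`: these are the
compatibility conditions of the spinor equation of `H = 1/2` surfaces in `ℝ^{1,2}`. -/
theorem stmt13 (τ₀ : ℝ × ℝ → ℝ) (Q₀ : ℝ × ℝ → ℂ)
    (hτ : ContDiff ℝ (⊤ : ℕ∞) τ₀) (hτpos : ∀ p, 0 < τ₀ p)
    (hQ : ContDiff ℝ (⊤ : ℕ∞) Q₀)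
    (v : ℝ × ℝ → Quaternion ℂ) (hvs : QSmooth v) (hvW : ∀ p, v p ∈ Wset)
    (hvnz : ∀ p, Hvv (v p) ≠ 0) (hsys : VSystem τ₀ Q₀ v) :
    (∀ p, qdzbar (fun s => cI (Q₀ s)) p = 0) ∧
    (∀ p, qdz (fun s => qdzbar (fun r => rQ (Real.log (Real.sqrt (τ₀ r)))) s) p
        = rQ (-(Complex.normSq (Q₀ p)) / τ₀ p + τ₀ p / 16)) :=
  stmt13_general τ₀ Q₀ hτ hτpos hQ v hvs hvnz hsys
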